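/- Every strictly decreasing element of PL(ℝ) can be written as a composite of three involutions belonging to PL(ℝ), and every element of PL(ℝ) can be written as a composite of four involutions belonging to PL(ℝ). (In other words, PL⁻(ℝ) ⊆ I₃(PL(ℝ)) and PL(ℝ) = I₄(PL(ℝ)).) -/

import Mathlib

/-- `f` is a homeomorphism of `ℝ`: a bijection of `ℝ` that is continuous in both directions. -/
def IsHomeo (f : Equiv.Perm ℝ) : Prop := Continuous f ∧ Continuous f.symm

/-- `f` is locally affine at `x`: it agrees with an affine map on a neighbourhood of `x`. -/
def IsLocallyAffineAt (f : ℝ → ℝ) (x : ℝ) : Prop :=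
  ∃ a b : ℝ, ∀ᶠ y in nhds x, f y = a * y + b

/-- Membership in PLF(ℝ): a homeomorphism of `ℝ` that is locally affine at all but
finitely many points. -/
def InPLF (f : Equiv.Perm ℝ) : Prop :=
  IsHomeo f ∧ {x : ℝ | ¬ IsLocallyAffineAt (⇑f) x}.Finite

/-- Membership in PL(ℝ): a homeomorphism of `ℝ` whose set of points of non-local-affinity
has no accumulation point in `ℝ`. -/
def InPL (f : Equiv.Perm ℝ) : Prop :=
  IsHomeo f ∧ ∀ x : ℝ, ¬ AccPt x (Filter.principal {y : ℝ | ¬ IsLocallyAffineAt (⇑f) y})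

/-!
For a decreasing `f ∈ PL(ℝ)` let `d = f⁻¹ - 1`. The pointwise minimum `τ` of `d` and `d⁻¹` is a
decreasing PL involution with `τ (f x) ≤ x - 1`, so `g = τ f` is increasing with `g x < x`.
The intervals `(gⁿ⁺¹ 0, gⁿ 0]` tile `ℝ`; moving each to `(g 0, 0]` by `g⁻ⁿ` and translating it
by `n * g 0` gives a PL conjugacy from `g` to the translation by `g 0`, which is the product of
the reflections `t ↦ g 0 - t` and `t ↦ -t`. Hence `f = τ g` is a product of three PL
involutions, and an increasing `f` becomes decreasing after composing with `t ↦ -t`.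
-/

open Filter Set Topology Function

section LocallyAffine

variable {f g : ℝ → ℝ} {x : ℝ}

lemma isLocallyAffineAt_affine (a b x : ℝ) : IsLocallyAffineAt (fun y => a * y + b) x :=
  ⟨a, b, .of_forall fun _ => rfl⟩

lemma IsLocallyAffineAt.congr (hg : IsLocallyAffineAt g x) (hfg : f =ᶠ[𝓝 x] g) :
    IsLocallyAffineAt f x := by
  obtain ⟨a, b, hab⟩ := hg
  exact ⟨a, b, hfg.trans hab⟩

lemma IsLocallyAffineAt.continuousAt (hf : IsLocallyAffineAt f x) : ContinuousAt f x := by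
  obtain ⟨a, b, hab⟩ := hf
  exact (continuous_const.mul continuous_id |>.add continuous_const).continuousAt.congr
    (EventuallyEq.symm hab)

lemma IsLocallyAffineAt.comp (hf : IsLocallyAffineAt f (g x)) (hg : IsLocallyAffineAt g x) :
    IsLocallyAffineAt (f ∘ g) x := by
  obtain ⟨c, d, hcd⟩ := hf
  have hgc := hg.continuousAt
  obtain ⟨a, b, hab⟩ := hg
  refine ⟨c * a, c * b + d, ?_⟩
  filter_upwards [hab, hgc.eventually hcd] with y h₁ h₂
  rw [comp_apply, h₂, h₁]
  ring

lemma IsLocallyAffineAt.symm {e : Equiv.Perm ℝ} {y : ℝ} (hc : ContinuousAt e.symm y)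
    (he : IsLocallyAffineAt e (e.symm y)) : IsLocallyAffineAt e.symm y := by
  obtain ⟨a, b, hab⟩ := he
  have ha : a ≠ 0 := by
    rintro rfl
    obtain ⟨z, hz, hzy⟩ := ((hab.filter_mono nhdsWithin_le_nhds).and
      (self_mem_nhdsWithin (s := {e.symm y}ᶜ))).exists
    exact hzy (e.injective (by rw [hz, hab.self_of_nhds]; ring))
  refine ⟨a⁻¹, -b / a, ?_⟩
  filter_upwards [hc.eventually hab] with z hz
  rw [Equiv.apply_symm_apply] at hz
  field_simp
  linarith

lemma IsLocallyAffineAt.min_of_lt (hf : IsLocallyAffineAt f x) (hg : ContinuousAt g x)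
    (hlt : f x < g x) : IsLocallyAffineAt (fun y => min (f y) (g y)) x :=
  hf.congr <| (hf.continuousAt.eventually_lt hg hlt).mono fun _ hy => min_eq_left hy.le

/-- The slope is a locally constant derivative, hence constant on `U`. -/
lemma exists_affine_of_isLocallyAffineAt {U : Set ℝ} (hU : IsOpen U) (hpc : IsPreconnected U)
    (h : ∀ y ∈ U, IsLocallyAffineAt f y) : ∃ a b, ∀ y ∈ U, f y = a * y + b := by
  have hderiv : ∀ y ∈ U, ∃ a, ∀ᶠ z in 𝓝 y, HasDerivAt f a z ∧ deriv f z = a := by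
    intro y hy
    obtain ⟨a, b, hab⟩ := h y hy
    refine ⟨a, hab.eventually_nhds.mono fun z hz => ?_⟩
    have : HasDerivAt f a z := by
      simpa using ((hasDerivAt_id z).const_mul a |>.add_const b).congr_of_eventuallyEq hz
    exact ⟨this, this.deriv⟩
  have hdiff : DifferentiableOn ℝ f U := fun y hy =>
    let ⟨_, ha⟩ := hderiv y hy; ha.self_of_nhds.1.differentiableAt.differentiableWithinAt
  have hderiv' : ∀ y ∈ U, HasDerivAt (deriv f) 0 y := fun y hy =>
    let ⟨a, ha⟩ := hderiv y hy
    (hasDerivAt_const y a).congr_of_eventuallyEq (ha.mono fun _ hz => hz.2)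
  obtain ⟨a, ha⟩ := hU.exists_is_const_of_deriv_eq_zero hpc
    (fun y hy => (hderiv' y hy).differentiableAt.differentiableWithinAt)
    (fun y hy => (hderiv' y hy).deriv)
  obtain ⟨b, hb⟩ := hU.exists_eq_add_of_deriv_eq hpc hdiff
    ((differentiable_id.const_mul a).differentiableOn) (fun y hy => by simp [ha y hy])
  exact ⟨a, b, hb⟩

end LocallyAffine

lemma eventually_codiscrete_iff {X : Type*} [TopologicalSpace X] {p : X → Prop} :
    (∀ᶠ y in codiscrete X, p y) ↔ ∀ x, ∀ᶠ y in 𝓝[≠] x, p y := by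
  simp [Filter.Eventually, codiscrete, mem_codiscreteWithin_iff_forall_mem_nhdsNE]

lemma tendsto_codiscrete {X Y : Type*} [TopologicalSpace X] [TopologicalSpace Y] {g : X → Y}
    (hc : Continuous g) (hinj : Injective g) : Tendsto g (codiscrete X) (codiscrete Y) := by
  intro s hs
  refine eventually_codiscrete_iff.2 fun x => ?_
  have : Tendsto g (𝓝[≠] x) (𝓝[≠] (g x)) :=
    tendsto_nhdsWithin_of_tendsto_nhds_of_eventually_within _
      (hc.continuousAt.tendsto.mono_left nhdsWithin_le_nhds)
      (eventually_mem_nhdsWithin.mono fun _ hy => hinj.ne hy)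
  exact this (eventually_codiscrete_iff.1 hs (g x))

def IsPiecewiseAffine (f : ℝ → ℝ) : Prop := ∀ᶠ x in codiscrete ℝ, IsLocallyAffineAt f x

lemma inPL_iff {f : Equiv.Perm ℝ} : InPL f ↔ IsHomeo f ∧ IsPiecewiseAffine f := by
  rw [InPL, IsPiecewiseAffine, Filter.Eventually, mem_codiscrete_accPt, compl_ofPred]

namespace IsPiecewiseAffine

variable {f g : ℝ → ℝ}

lemma affine (a b : ℝ) : IsPiecewiseAffine fun y => a * y + b :=
  .of_forall (isLocallyAffineAt_affine a b)

protected lemma comp (hf : IsPiecewiseAffine f) (hg : IsPiecewiseAffine g) (hc : Continuous g)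
    (hinj : Injective g) : IsPiecewiseAffine (f ∘ g) := by
  filter_upwards [hg, tendsto_codiscrete hc hinj hf] with y hgy hfy
  exact hfy.comp hgy

protected lemma symm {e : Equiv.Perm ℝ} (he : IsPiecewiseAffine e) (hc : Continuous e.symm) :
    IsPiecewiseAffine e.symm := by
  filter_upwards [tendsto_codiscrete hc e.symm.injective he] with y hy
  exact hy.symm hc.continuousAt

lemma eventually_of_eqOn (hg : IsPiecewiseAffine g) {U : Set ℝ} (hU : IsOpen U)
    (hfg : EqOn f g U) : ∀ᶠ y in codiscrete ℝ, y ∈ U → IsLocallyAffineAt f y := by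
  filter_upwards [hg] with y hy hyU
  exact hy.congr (hfg.eventuallyEq_of_mem (hU.mem_nhds hyU))

lemma min_affine (a b c d : ℝ) : IsPiecewiseAffine fun y => min (a * y + b) (c * y + d) := by
  by_cases hab : a = c ∧ b = d
  · obtain ⟨rfl, rfl⟩ := hab
    simpa using affine a b
  have hsub : {y | a * y + b = c * y + d}.Subsingleton := by
    intro y hy z hz
    by_contra hyz
    simp only [mem_ofPred_eq] at hy hz
    have hac : a = c := mul_right_cancel₀ (sub_ne_zero.2 hyz) (by linarith)
    exact hab ⟨hac, by subst hac; linarith⟩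
  filter_upwards [compl_finite_mem_codiscreteWithin hsub.finite] with y hy
  rcases lt_or_gt_of_ne hy with hlt | hlt
  · exact (isLocallyAffineAt_affine a b y).min_of_lt (by fun_prop) hlt
  · simpa only [min_comm] using (isLocallyAffineAt_affine c d y).min_of_lt (by fun_prop) hlt

/-- On each side of a point, `f` and `g` are affine on some interval (affine maps on a
preconnected set), and the minimum of two affine maps breaks at most once. -/
protected lemma min (hf : IsPiecewiseAffine f) (hg : IsPiecewiseAffine g) :
    IsPiecewiseAffine fun y => min (f y) (g y) := by
  have hside : ∀ U : Set ℝ, IsOpen U → IsPreconnected U →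
      (∀ y ∈ U, IsLocallyAffineAt f y ∧ IsLocallyAffineAt g y) →
      ∀ᶠ y in codiscrete ℝ, y ∈ U → IsLocallyAffineAt (fun y => min (f y) (g y)) y := by
    intro U hU hpc h
    obtain ⟨a, b, hab⟩ := exists_affine_of_isLocallyAffineAt hU hpc fun y hy => (h y hy).1
    obtain ⟨c, d, hcd⟩ := exists_affine_of_isLocallyAffineAt hU hpc fun y hy => (h y hy).2
    exact (min_affine a b c d).eventually_of_eqOn hU fun y hy => by simp only [hab y hy, hcd y hy]
  refine eventually_codiscrete_iff.2 fun x => ?_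
  have hfg := eventually_codiscrete_iff.1 (hf.and hg) x
  rw [← nhdsLT_sup_nhdsGT, eventually_sup] at hfg ⊢
  obtain ⟨u, hu, hUf⟩ := mem_nhdsLT_iff_exists_Ioo_subset.1 hfg.1
  obtain ⟨v, hv, hVf⟩ := mem_nhdsGT_iff_exists_Ioo_subset.1 hfg.2
  constructor
  · filter_upwards [nhdsLT_le_nhdsNE x (eventually_codiscrete_iff.1
      (hside _ isOpen_Ioo isPreconnected_Ioo hUf) x), Ioo_mem_nhdsLT hu] with y h hy using h hy
  · filter_upwards [nhdsGT_le_nhdsNE x (eventually_codiscrete_iff.1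
      (hside _ isOpen_Ioo isPreconnected_Ioo hVf) x), Ioo_mem_nhdsGT hv] with y h hy using h hy

end IsPiecewiseAffine

open Equiv

def PLGroup : Subgroup (Perm ℝ) where
  carrier := {f | InPL f}
  one_mem' := inPL_iff.2 ⟨⟨continuous_id, continuous_id⟩,
    by simpa [Function.id_def] using IsPiecewiseAffine.affine 1 0⟩
  mul_mem' {f g} hf hg := by
    rw [mem_ofPred_eq, inPL_iff] at *
    exact ⟨⟨hf.1.1.comp hg.1.1, hg.1.2.comp hf.1.2⟩, hf.2.comp hg.2 hg.1.1 g.injective⟩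
  inv_mem' {f} hf := by
    rw [mem_ofPred_eq, inPL_iff] at *
    exact ⟨⟨hf.1.2, hf.1.1⟩, hf.2.symm hf.1.2⟩

lemma mem_PLGroup_iff {f : Perm ℝ} : f ∈ PLGroup ↔ InPL f := Iff.rfl

lemma mem_PLGroup_of_affine {e : Perm ℝ} (a b : ℝ) (he : ∀ x, e x = a * x + b) :
    e ∈ PLGroup := by
  have ha : a ≠ 0 := by
    rintro rfl
    exact zero_ne_one (e.injective (by simp [he]))
  have he' : ∀ y, e⁻¹ y = a⁻¹ * y + -b / a := fun y => by
    have := he (e.symm y)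
    rw [apply_symm_apply] at this
    rw [Perm.coe_inv]
    field_simp
    linarith
  rw [mem_PLGroup_iff, inPL_iff, IsHomeo, show ⇑e = _ from funext he,
    show ⇑e.symm = _ from funext he']
  exact ⟨⟨by fun_prop, by fun_prop⟩, .affine a b⟩

def IsPLInvolution (τ : Perm ℝ) : Prop := InPL τ ∧ τ * τ = 1

lemma IsPLInvolution.conj {τ : Perm ℝ} (hτ : IsPLInvolution τ) {φ : Perm ℝ} (hφ : φ ∈ PLGroup) :
    IsPLInvolution (φ⁻¹ * τ * φ) := by
  refine ⟨mul_mem (mul_mem (inv_mem hφ) hτ.1) hφ, ?_⟩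
  calc φ⁻¹ * τ * φ * (φ⁻¹ * τ * φ) = φ⁻¹ * (τ * τ) * φ := by group
    _ = 1 := by rw [hτ.2]; group

lemma isPLInvolution_subLeft (c : ℝ) : IsPLInvolution (Equiv.subLeft c) :=
  ⟨mem_PLGroup_of_affine (-1) c fun x => by simp; ring, by ext; simp⟩

section Order

variable {α : Type*} [LinearOrder α] {d : Perm α}

lemma Equiv.Perm.strictMono_inv (hd : StrictMono d) : StrictMono ⇑d⁻¹ :=
  fun u v huv => hd.lt_iff_lt.1 (by simpa using huv)

lemma Equiv.Perm.strictAnti_inv (hd : StrictAnti d) : StrictAnti ⇑d⁻¹ :=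
  fun u v huv => hd.lt_iff_gt.1 (by simpa using huv)

def minInv (d : Perm α) (x : α) : α := min (d x) (d⁻¹ x)

lemma minInv_apply_self_of_le (hd : StrictAnti d) {x : α} (h : d x ≤ d⁻¹ x) :
    minInv d (d x) = x := by
  rw [minInv, Perm.coe_inv, symm_apply_apply]
  exact min_eq_right (by simpa using hd.antitone h)

lemma involutive_minInv (hd : StrictAnti d) : Involutive (minInv d) := by
  intro x
  rcases le_total (d x) (d⁻¹ x) with h | h
  · rw [show minInv d x = d x from min_eq_left h]
    exact minInv_apply_self_of_le hd h
  · rw [show minInv d x = d⁻¹ x from min_eq_right h]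
    simpa [minInv, min_comm] using
      minInv_apply_self_of_le (Perm.strictAnti_inv hd) (by simpa using h)

lemma strictAnti_minInv (hd : StrictAnti d) : StrictAnti (minInv d) := fun _ _ hab =>
  lt_min ((min_le_left _ _).trans_lt (hd hab))
    ((min_le_right _ _).trans_lt (Perm.strictAnti_inv hd hab))

end Order

lemma isPLInvolution_minInv {d : Perm ℝ} (hd : StrictAnti d) (hPL : d ∈ PLGroup) :
    IsPLInvolution ((involutive_minInv hd).toPerm _) := by
  obtain ⟨⟨hc, hc'⟩, hpa⟩ := inPL_iff.1 hPL
  refine ⟨inPL_iff.2 ⟨?_, ?_⟩, Perm.ext (involutive_minInv hd)⟩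
  · rw [IsHomeo, Involutive.toPerm_symm, Involutive.coe_toPerm]
    exact ⟨hc.min hc', hc.min hc'⟩
  · exact hpa.min (hpa.symm hc')

lemma not_bddBelow_range_iterate {α : Type*} [ConditionallyCompleteLinearOrder α]
    [TopologicalSpace α] [OrderTopology α] {u : α → α} (hu : Continuous u) (hlt : ∀ x, u x < x)
    (x : α) : ¬ BddBelow (range fun k => u^[k] x) := by
  intro hbdd
  have hanti : Antitone fun k => u^[k] x :=
    antitone_nat_of_succ_le fun k => by rw [iterate_succ_apply']; exact (hlt _).le
  exact (hlt _).ne (isFixedPt_of_tendsto_iterate (tendsto_atTop_ciInf hanti hbdd) hu.continuousAt)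

lemma StrictAnti.csSup_setOf_le_eq_iff {α : Type*} [LinearOrder α] {X : ℤ → α}
    (hX : StrictAnti X) {y : α} (hlow : ∃ m, X m < y) (hup : ∃ m, y ≤ X m) {n : ℤ} :
    sSup {k | y ≤ X k} = n ↔ y ∈ Ioc (X (n + 1)) (X n) := by
  have hbdd : BddAbove {k | y ≤ X k} := by
    obtain ⟨m, hm⟩ := hlow
    exact ⟨m, fun k hk => le_of_not_gt fun hmk => (hX hmk).not_ge (hm.trans_le hk).le⟩
  have hmem : y ≤ X (sSup {k | y ≤ X k}) := Int.csSup_mem hup hbdd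
  constructor
  · rintro rfl
    exact ⟨lt_of_not_ge fun h => (lt_add_one _).not_ge (le_csSup hbdd h), hmem⟩
  · rintro ⟨h₁, h₂⟩
    refine le_antisymm (le_of_not_gt fun h => ?_) (le_csSup hbdd h₂)
    exact (hX.antitone (Int.add_one_le_iff.2 h)).not_gt (h₁.trans_le hmem)

section Linearizer

variable {g : Perm ℝ}

lemma Equiv.Perm.strictMono_zpow (hmono : StrictMono g) (k : ℤ) : StrictMono ⇑(g ^ k) := by
  induction k using Int.induction_on with
  | zero => simpa using strictMono_id
  | succ k ih => rw [zpow_add_one, Perm.coe_mul]; exact ih.comp hmono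
  | pred k ih => rw [zpow_sub_one, Perm.coe_mul]; exact ih.comp (Perm.strictMono_inv hmono)

lemma strictAnti_zpow_apply (hlt : ∀ x, g x < x) (x : ℝ) : StrictAnti fun n : ℤ => (g ^ n) x :=
  strictAnti_int_of_succ_lt fun n => by rw [add_comm, zpow_one_add, Perm.mul_apply]; exact hlt _

lemma exists_zpow_apply_lt (hc : Continuous g) (hlt : ∀ x, g x < x) (x y : ℝ) :
    ∃ n : ℤ, (g ^ n) x < y := by
  obtain ⟨_, ⟨k, rfl⟩, hk⟩ := not_bddBelow_iff.1 (not_bddBelow_range_iterate hc hlt x) y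
  exact ⟨k, by simpa [Perm.iterate_eq_pow] using hk⟩

lemma exists_lt_zpow_apply (hc : Continuous ⇑g⁻¹) (hlt : ∀ x, g x < x) (x y : ℝ) :
    ∃ n : ℤ, y < (g ^ n) x := by
  have hgt (x : ℝ) : x < g⁻¹ x := by simpa using hlt (g⁻¹ x)
  obtain ⟨_, ⟨k, rfl⟩, hk⟩ :=
    not_bddBelow_iff.1 (not_bddBelow_range_iterate (α := ℝᵒᵈ) hc hgt x) y
  have hk' : y < (⇑g⁻¹)^[k] x := hk
  exact ⟨-k, by rwa [Perm.iterate_eq_pow, inv_pow, ← zpow_natCast, ← zpow_neg] at hk'⟩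

/-- The index `n` of the fundamental domain `Ioc ((g ^ (n + 1)) 0) ((g ^ n) 0)` containing `y`. -/
noncomputable def orbitIndex (g : Perm ℝ) (y : ℝ) : ℤ := sSup {n : ℤ | y ≤ (g ^ n) 0}

lemma orbitIndex_eq_iff (hg : IsHomeo g) (hlt : ∀ x, g x < x) {y : ℝ} {n : ℤ} :
    orbitIndex g y = n ↔ y ∈ Ioc ((g ^ (n + 1)) 0) ((g ^ n) 0) :=
  (strictAnti_zpow_apply hlt 0).csSup_setOf_le_eq_iff (exists_zpow_apply_lt hg.1 hlt 0 y)
    ((exists_lt_zpow_apply hg.2 hlt 0 y).imp fun _ h => h.le)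

lemma mem_Ioc_orbitIndex (hg : IsHomeo g) (hlt : ∀ x, g x < x) (y : ℝ) :
    y ∈ Ioc ((g ^ (orbitIndex g y + 1)) 0) ((g ^ orbitIndex g y) 0) :=
  (orbitIndex_eq_iff hg hlt).1 rfl

lemma zpow_apply_mem_Ioc_iff (hmono : StrictMono g) (k n : ℤ) {y : ℝ} :
    (g ^ k) y ∈ Ioc ((g ^ (n + k + 1)) 0) ((g ^ (n + k)) 0) ↔
      y ∈ Ioc ((g ^ (n + 1)) 0) ((g ^ n) 0) := by
  have hk := Perm.strictMono_zpow hmono k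
  have h₁ : (g ^ (n + k + 1)) 0 = (g ^ k) ((g ^ (n + 1)) 0) := by
    rw [← Perm.mul_apply, ← zpow_add, show k + (n + 1) = n + k + 1 by ring]
  have h₂ : (g ^ (n + k)) 0 = (g ^ k) ((g ^ n) 0) := by
    rw [← Perm.mul_apply, ← zpow_add, add_comm]
  rw [h₁, h₂, mem_Ioc, mem_Ioc, hk.lt_iff_lt, hk.le_iff_le]

/-- A conjugacy from `g` to the translation by `g 0`. -/
noncomputable def linearizer (g : Perm ℝ) (y : ℝ) : ℝ :=
  (g ^ (-orbitIndex g y)) y + orbitIndex g y * g 0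

lemma linearizer_eq_of_mem_Icc (hg : IsHomeo g) (hlt : ∀ x, g x < x) {n : ℤ} {y : ℝ}
    (hy : y ∈ Icc ((g ^ (n + 1)) 0) ((g ^ n) 0)) : linearizer g y = (g ^ (-n)) y + n * g 0 := by
  rcases hy.1.eq_or_lt with rfl | h
  · have : orbitIndex g ((g ^ (n + 1)) 0) = n + 1 :=
      (orbitIndex_eq_iff hg hlt).2 ⟨strictAnti_zpow_apply hlt 0 (lt_add_one _), le_rfl⟩
    rw [linearizer, this, ← Perm.mul_apply, ← Perm.mul_apply, ← zpow_add, ← zpow_add,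
      neg_add_cancel, show -n + (n + 1) = 1 by ring]
    simp only [zpow_zero, Perm.one_apply, zpow_one]
    push_cast
    ring
  · rw [linearizer, (orbitIndex_eq_iff hg hlt).2 ⟨h, hy.2⟩]

lemma linearizer_mem_Ioc (hmono : StrictMono g) (hg : IsHomeo g) (hlt : ∀ x, g x < x) {n : ℤ}
    {y : ℝ} (hy : y ∈ Ioc ((g ^ (n + 1)) 0) ((g ^ n) 0)) :
    linearizer g y ∈ Ioc ((n + 1) * g 0) (n * g 0) := by
  have h := (zpow_apply_mem_Ioc_iff hmono (-n) n).2 hy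
  simp only [add_neg_cancel, zero_add, zpow_one, zpow_zero, Perm.one_apply, mem_Ioc] at h
  rw [linearizer, (orbitIndex_eq_iff hg hlt).2 hy]
  constructor <;> linarith [h.1, h.2]

lemma linearizer_apply (hmono : StrictMono g) (hg : IsHomeo g) (hlt : ∀ x, g x < x) (y : ℝ) :
    linearizer g (g y) = g 0 + linearizer g y := by
  have hy := mem_Ioc_orbitIndex hg hlt y
  have : orbitIndex g (g y) = orbitIndex g y + 1 :=
    (orbitIndex_eq_iff hg hlt).2 (by simpa using (zpow_apply_mem_Ioc_iff hmono 1 _).2 hy)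
  rw [linearizer, linearizer, this, ← Perm.mul_apply (g ^ _), ← zpow_add_one,
    show -(orbitIndex g y + 1) + 1 = -orbitIndex g y by ring]
  push_cast
  ring

lemma strictMono_linearizer (hmono : StrictMono g) (hg : IsHomeo g) (hlt : ∀ x, g x < x) :
    StrictMono (linearizer g) := by
  intro y y' hyy'
  have hy := mem_Ioc_orbitIndex hg hlt y
  have hy' := mem_Ioc_orbitIndex hg hlt y'
  have hle : orbitIndex g y' ≤ orbitIndex g y := by
    by_contra! h
    exact (hy'.2.trans ((strictAnti_zpow_apply hlt 0).antitone h)).not_gt (hy.1.trans hyy')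
  rcases hle.eq_or_lt with h | h
  · rw [linearizer, linearizer, h]
    linarith [Perm.strictMono_zpow hmono (-orbitIndex g y) hyy']
  · have h₀ : g 0 < 0 := hlt 0
    have h₁ := linearizer_mem_Ioc hmono hg hlt hy
    have h₂ := linearizer_mem_Ioc hmono hg hlt hy'
    have h₃ : (orbitIndex g y' + 1 : ℝ) ≤ orbitIndex g y := by exact_mod_cast h
    nlinarith [h₁.2, h₂.1]

lemma surjective_linearizer (hmono : StrictMono g) (hg : IsHomeo g) (hlt : ∀ x, g x < x) :
    Surjective (linearizer g) := by
  intro z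
  have h₀ : g 0 < 0 := hlt 0
  set n := ⌊z / g 0⌋
  have h₁ : z ≤ n * g 0 := (le_div_iff_of_neg h₀).1 (Int.floor_le _)
  have h₂ : (n + 1) * g 0 < z := (div_lt_iff_of_neg h₀).1 (Int.lt_floor_add_one _)
  have ht : z - n * g 0 ∈ Ioc ((g ^ (0 + 1 : ℤ)) 0) ((g ^ (0 : ℤ)) 0) := by
    simp only [zero_add, zpow_one, zpow_zero, Perm.one_apply, mem_Ioc]
    constructor <;> linarith
  refine ⟨(g ^ n) (z - n * g 0), ?_⟩
  rw [linearizer_eq_of_mem_Icc hg hlt (Ioc_subset_Icc_self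
    (by simpa using (zpow_apply_mem_Ioc_iff hmono n 0).2 ht))]
  simp

end Linearizer

/-- `linearizer g` agrees with a PL map on each closed fundamental domain, and these cover a
neighbourhood of any point by at most two of them. -/
lemma isPiecewiseAffine_linearizer {g : Perm ℝ} (hPL : g ∈ PLGroup) (hlt : ∀ x, g x < x) :
    IsPiecewiseAffine (linearizer g) := by
  have hg := (inPL_iff.1 hPL).1
  have hpiece (n : ℤ) : ∀ᶠ y in codiscrete ℝ,
      y ∈ Ioo ((g ^ (n + 1)) 0) ((g ^ n) 0) → IsLocallyAffineAt (linearizer g) y := by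
    have hmem : Equiv.addRight ((n : ℝ) * g 0) * g ^ (-n) ∈ PLGroup :=
      mul_mem (mem_PLGroup_of_affine 1 (n * g 0) fun x => by simp) (zpow_mem hPL _)
    exact (inPL_iff.1 hmem).2.eventually_of_eqOn isOpen_Ioo fun y hy =>
      linearizer_eq_of_mem_Icc hg hlt (Ioo_subset_Icc_self hy)
  refine eventually_codiscrete_iff.2 fun x => ?_
  set n := orbitIndex g x
  obtain ⟨hx₁, hx₂⟩ := mem_Ioc_orbitIndex hg hlt x
  have hnhds : Ioo ((g ^ (n + 1)) 0) ((g ^ (n - 1)) 0) ∈ 𝓝[≠] x :=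
    nhdsWithin_le_nhds <| Ioo_mem_nhds hx₁
      (hx₂.trans_lt (strictAnti_zpow_apply hlt 0 (sub_one_lt n)))
  filter_upwards [eventually_codiscrete_iff.1 (hpiece n) x,
    eventually_codiscrete_iff.1 (hpiece (n - 1)) x,
    eventually_codiscrete_iff.1 (compl_singleton_mem_codiscreteWithin ((g ^ n) 0)) x, hnhds]
    with y h₁ h₂ hne hy
  rcases lt_or_gt_of_ne hne with h | h
  · exact h₁ ⟨hy.1, h⟩
  · exact h₂ ⟨by rwa [sub_add_cancel], hy.2⟩

theorem exists_isPLInvolution_mul_of_apply_lt {g : Perm ℝ} (hPL : g ∈ PLGroup)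
    (hmono : StrictMono g) (hlt : ∀ x, g x < x) :
    ∃ τ₁ τ₂, IsPLInvolution τ₁ ∧ IsPLInvolution τ₂ ∧ g = τ₁ * τ₂ := by
  have hg := (inPL_iff.1 hPL).1
  set Ψ : ℝ ≃o ℝ := (strictMono_linearizer hmono hg hlt).orderIsoOfSurjective _
    (surjective_linearizer hmono hg hlt) with hΨ
  set Φ : Perm ℝ := Ψ.toEquiv with hΦ
  have hΦPL : Φ ∈ PLGroup := inPL_iff.2 ⟨⟨Ψ.continuous, Ψ.symm.continuous⟩,
    isPiecewiseAffine_linearizer hPL hlt⟩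
  have hconj : Φ * g = Equiv.subLeft (g 0) * Equiv.subLeft 0 * Φ := by
    ext y
    simp [hΦ, hΨ, linearizer_apply hmono hg hlt]
  refine ⟨_, _, (isPLInvolution_subLeft (g 0)).conj hΦPL,
    (isPLInvolution_subLeft 0).conj hΦPL, ?_⟩
  calc g = Φ⁻¹ * (Equiv.subLeft (g 0) * Equiv.subLeft 0 * Φ) := by
        rw [← hconj, inv_mul_cancel_left]
    _ = _ := by group

theorem exists_isPLInvolution_mul_mul_of_strictAnti {f : Perm ℝ} (hf : f ∈ PLGroup)
    (hanti : StrictAnti f) : ∃ τ₁ τ₂ τ₃, IsPLInvolution τ₁ ∧ IsPLInvolution τ₂ ∧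
      IsPLInvolution τ₃ ∧ f = τ₁ * τ₂ * τ₃ := by
  set d : Perm ℝ := Equiv.addRight (-1) * f⁻¹
  have hd : StrictAnti d :=
    (strictMono_id.add_const (-1)).comp_strictAnti (Perm.strictAnti_inv hanti)
  have hdPL : d ∈ PLGroup :=
    mul_mem (mem_PLGroup_of_affine 1 (-1) fun x => by simp) (inv_mem hf)
  set τ := (involutive_minInv hd).toPerm _
  have hτ : IsPLInvolution τ := isPLInvolution_minInv hd hdPL
  have hlt (x : ℝ) : (τ * f) x < x :=
    calc (τ * f) x ≤ d (f x) := min_le_left _ _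
      _ < x := by simp [d]
  obtain ⟨τ₂, τ₃, h₂, h₃, hτf⟩ :=
    exists_isPLInvolution_mul_of_apply_lt (mul_mem hτ.1 hf) ((strictAnti_minInv hd).comp hanti)
      hlt
  refine ⟨τ, τ₂, τ₃, hτ, h₂, h₃, ?_⟩
  rw [mul_assoc, ← hτf, ← mul_assoc, hτ.2, one_mul]

theorem exists_isPLInvolution_mul_mul_mul {f : Perm ℝ} (hf : f ∈ PLGroup) :
    ∃ τ₁ τ₂ τ₃ τ₄, IsPLInvolution τ₁ ∧ IsPLInvolution τ₂ ∧ IsPLInvolution τ₃ ∧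
      IsPLInvolution τ₄ ∧ f = τ₁ * τ₂ * τ₃ * τ₄ := by
  rcases Continuous.strictMono_of_inj (inPL_iff.1 hf).1.1 f.injective with hmono | hanti
  · have hσ := isPLInvolution_subLeft 0
    set σ := Equiv.subLeft (0 : ℝ)
    have hσanti : StrictAnti (σ * f) := fun a b hab => by simpa [σ] using hmono hab
    obtain ⟨τ₁, τ₂, τ₃, h₁, h₂, h₃, hσf⟩ :=
      exists_isPLInvolution_mul_mul_of_strictAnti (mul_mem hσ.1 hf) hσanti
    refine ⟨σ, τ₁, τ₂, τ₃, hσ, h₁, h₂, h₃, ?_⟩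
    rw [mul_assoc σ, mul_assoc σ, ← hσf, ← mul_assoc, hσ.2, one_mul]
  · obtain ⟨τ₁, τ₂, τ₃, h₁, h₂, h₃, hf'⟩ := exists_isPLInvolution_mul_mul_of_strictAnti hf hanti
    exact ⟨τ₁, τ₂, τ₃, 1, h₁, h₂, h₃, ⟨one_mem PLGroup, mul_one 1⟩, by rw [mul_one, hf']⟩

/-- PL⁻(ℝ) ⊆ I₃(PL(ℝ)) and PL(ℝ) = I₄(PL(ℝ)). -/
theorem stmt_10 :
    (∀ f : Equiv.Perm ℝ, InPL f → StrictAnti (⇑f) →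
      ∃ τ₁ τ₂ τ₃ : Equiv.Perm ℝ,
        (InPL τ₁ ∧ τ₁ * τ₁ = 1) ∧ (InPL τ₂ ∧ τ₂ * τ₂ = 1) ∧
        (InPL τ₃ ∧ τ₃ * τ₃ = 1) ∧ f = τ₁ * τ₂ * τ₃) ∧
    (∀ f : Equiv.Perm ℝ, InPL f →
      ∃ τ₁ τ₂ τ₃ τ₄ : Equiv.Perm ℝ,
        (InPL τ₁ ∧ τ₁ * τ₁ = 1) ∧ (InPL τ₂ ∧ τ₂ * τ₂ = 1) ∧
        (InPL τ₃ ∧ τ₃ * τ₃ = 1) ∧ (InPL τ₄ ∧ τ₄ * τ₄ = 1) ∧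
        f = τ₁ * τ₂ * τ₃ * τ₄) :=
  ⟨fun _ hf hanti => exists_isPLInvolution_mul_mul_of_strictAnti hf hanti,
    fun _ hf => exists_isPLInvolution_mul_mul_mul hf⟩
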